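/- arXiv:2207.13609 — 2 statements merged into one kernel-verified Lean document; each statement's English description precedes it below -/
import Mathlib

section
/- Let ρ ∈ (0,1], θ > 0, and let ν be a one-dimensional Γ-grey measure with parameters ρ, θ. Then its second and fourth moments are ∫_ℝ x² dν(x) = θ^{ρ-1} e^{-θ}/Γ(ρ,θ) and ∫_ℝ x⁴ dν(x) = 3 e^{-θ} (θ^{ρ-1} + (1-ρ)θ^{ρ-2})/Γ(ρ,θ). -/
open MeasureTheory Real Set

open Filter Topology

/-- Upper incomplete gamma function `Γ(ρ, x) = ∫_x^∞ e^{-w} w^{ρ-1} dw`. -/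
noncomputable def uGamma (ρ x : ℝ) : ℝ := ∫ w in Set.Ioi x, Real.exp (-w) * w ^ (ρ - 1)

lemma uGamma_integrand_cont (ρ : ℝ) : ContinuousOn (fun w : ℝ => Real.exp (-w) * w ^ (ρ - 1)) (Set.Ioi 0) := by
  apply ContinuousOn.mul (Continuous.continuousOn (by continuity))
  exact fun w hw => (Real.continuousAt_rpow_const w _ (Or.inl (ne_of_gt hw))).continuousWithinAt

lemma uGamma_integrableOn (ρ : ℝ) (hρ : ρ ≤ 1) {c : ℝ} (hc : 0 < c) :
    IntegrableOn (fun w : ℝ => Real.exp (-w) * w ^ (ρ - 1)) (Set.Ioi c) := by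
  apply Integrable.mono' ((exp_neg_integrableOn_Ioi c one_pos).const_mul (c ^ (ρ - 1)))
  · exact ((uGamma_integrand_cont ρ).mono (Set.Ioi_subset_Ioi hc.le)).aestronglyMeasurable measurableSet_Ioi
  · filter_upwards [ae_restrict_mem measurableSet_Ioi] with w hw
    rw [norm_mul, Real.norm_eq_abs, Real.norm_eq_abs, abs_of_pos (Real.exp_pos _),
      abs_of_pos (Real.rpow_pos_of_pos (hc.trans hw) _), mul_comm, neg_one_mul]
    exact mul_le_mul_of_nonneg_right
      (Real.rpow_le_rpow_of_nonpos hc (le_of_lt hw) (by linarith)) (Real.exp_pos _).le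

lemma uGamma_pos (ρ : ℝ) (hρ : ρ ≤ 1) {c : ℝ} (hc : 0 < c) : 0 < uGamma ρ c := by
  rw [uGamma]
  apply (setIntegral_pos_iff_support_of_nonneg_ae ?_ (uGamma_integrableOn ρ hρ hc)).2
  · have : Set.Ioi c ⊆ Function.support fun w : ℝ => Real.exp (-w) * w ^ (ρ - 1) := by
      intro w hw
      exact ne_of_gt (mul_pos (Real.exp_pos _) (Real.rpow_pos_of_pos (hc.trans hw) _))
    calc (0:ENNReal) < volume (Set.Ioi c) := by simp
      _ ≤ _ := measure_mono (Set.subset_inter this (subset_refl _))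
  · filter_upwards [ae_restrict_mem measurableSet_Ioi] with w hw
    exact le_of_lt (mul_pos (Real.exp_pos _) (Real.rpow_pos_of_pos (hc.trans hw) _))

lemma uGamma_hasDerivAt (ρ : ℝ) (hρ : ρ ≤ 1) {y : ℝ} (hy : 0 < y) :
    HasDerivAt (uGamma ρ) (-(Real.exp (-y) * y ^ (ρ - 1))) y := by
  set φ : ℝ → ℝ := fun w => Real.exp (-w) * w ^ (ρ - 1) with hφ
  set c := y / 2 with hc
  have hc0 : 0 < c := by positivity
  have key : ∀ z : ℝ, c < z → uGamma ρ z = uGamma ρ c - ∫ t in c..z, φ t := by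
    intro z hz
    have hsplit : uGamma ρ c = (∫ t in Set.Ioc c z, φ t) + ∫ t in Set.Ioi z, φ t := by
      rw [uGamma, ← MeasureTheory.setIntegral_union (Set.Ioc_disjoint_Ioi le_rfl)
        measurableSet_Ioi ((uGamma_integrableOn ρ hρ hc0).mono_set Set.Ioc_subset_Ioi_self)
        ((uGamma_integrableOn ρ hρ hc0).mono_set (Set.Ioi_subset_Ioi hz.le)),
        Set.Ioc_union_Ioi_eq_Ioi hz.le]
    rw [intervalIntegral.integral_of_le hz.le]
    rw [uGamma]
    linarith [hsplit]
  have hftc : HasDerivAt (fun z => uGamma ρ c - ∫ t in c..z, φ t) (-(φ y)) y := by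
    rw [show -(φ y) = 0 - φ y by ring]
    apply (hasDerivAt_const y (uGamma ρ c)).sub
    apply intervalIntegral.integral_hasDerivAt_right
    · rw [intervalIntegrable_iff_integrableOn_Ioc_of_le (by linarith : c ≤ y)]
      exact (uGamma_integrableOn ρ hρ hc0).mono_set Set.Ioc_subset_Ioi_self
    · exact ⟨Set.Ioi c, Ioi_mem_nhds (by linarith),
        ((uGamma_integrand_cont ρ).mono (Set.Ioi_subset_Ioi hc0.le)).aestronglyMeasurable
          measurableSet_Ioi⟩
    · exact (uGamma_integrand_cont ρ).continuousAt (Ioi_mem_nhds hy)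
  apply hftc.congr_of_eventuallyEq
  filter_upwards [Ioi_mem_nhds (by linarith : c < y)] with z hz
  exact key z hz

lemma sin_ge_sub_cube (t : ℝ) (ht : 0 ≤ t) : t - t ^ 3 / 6 ≤ Real.sin t := by
  have hmono : MonotoneOn (fun t : ℝ => Real.sin t - (t - t ^ 3 / 6)) (Set.Ici 0) := by
    apply monotoneOn_of_deriv_nonneg (convex_Ici 0)
    · exact (Real.continuous_sin.sub (by continuity)).continuousOn
    · intro x hx
      exact ((Real.hasDerivAt_sin x).sub (((hasDerivAt_id x).sub
        (((hasDerivAt_pow 3 x).div_const 6))))).differentiableAt.differentiableWithinAt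
    · intro x hx
      have hd : HasDerivAt (fun t : ℝ => Real.sin t - (t - t ^ 3 / 6))
          (Real.cos x - (1 - ↑3 * x ^ 2 / 6)) x :=
        (Real.hasDerivAt_sin x).sub ((hasDerivAt_id x).sub ((hasDerivAt_pow 3 x).div_const 6))
      rw [hd.deriv]
      have := Real.one_sub_sq_div_two_le_cos (x := x)
      nlinarith
  have := hmono (Set.self_mem_Ici) (Set.mem_Ici.2 ht) ht
  simpa using this

lemma cos_le_taylor (t : ℝ) : Real.cos t ≤ 1 - t ^ 2 / 2 + t ^ 4 / 24 := by
  wlog ht : 0 ≤ t with H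
  · have := H (-t) (by linarith)
    rw [Real.cos_neg] at this; nlinarith [this]
  have hmono : MonotoneOn (fun t : ℝ => (1 - t ^ 2 / 2 + t ^ 4 / 24) - Real.cos t) (Set.Ici 0) := by
    apply monotoneOn_of_deriv_nonneg (convex_Ici 0)
    · exact ((by continuity : Continuous fun t : ℝ => (1 - t ^ 2 / 2 + t ^ 4 / 24)).sub
        Real.continuous_cos).continuousOn
    · intro x hx
      apply DifferentiableAt.differentiableWithinAt
      fun_prop
    · intro x hx
      have hd : HasDerivAt (fun t : ℝ => (1 - t ^ 2 / 2 + t ^ 4 / 24) - Real.cos t)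
          ((0 - ↑2 * x ^ 1 / 2 + ↑4 * x ^ 3 / 24) - (-Real.sin x)) x := by
        exact (((hasDerivAt_const x (1:ℝ)).sub ((hasDerivAt_pow 2 x).div_const 2)).add
          ((hasDerivAt_pow 4 x).div_const 24)).sub (Real.hasDerivAt_cos x)
      rw [hd.deriv]
      have hs := sin_ge_sub_cube x (le_of_lt (by simpa using hx))
      nlinarith
  have := hmono (Set.self_mem_Ici) (Set.mem_Ici.2 ht) ht
  simp at this
  nlinarith [this]

lemma sin_le_taylor (t : ℝ) (ht : 0 ≤ t) : Real.sin t ≤ t - t ^ 3 / 6 + t ^ 5 / 120 := by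
  have hmono : MonotoneOn (fun t : ℝ => (t - t ^ 3 / 6 + t ^ 5 / 120) - Real.sin t) (Set.Ici 0) := by
    apply monotoneOn_of_deriv_nonneg (convex_Ici 0)
    · exact ((by continuity : Continuous fun t : ℝ => t - t ^ 3 / 6 + t ^ 5 / 120).sub
        Real.continuous_sin).continuousOn
    · intro x hx
      apply DifferentiableAt.differentiableWithinAt; fun_prop
    · intro x hx
      have hd : HasDerivAt (fun t : ℝ => (t - t ^ 3 / 6 + t ^ 5 / 120) - Real.sin t)
          ((1 - ↑3 * x ^ 2 / 6 + ↑5 * x ^ 4 / 120) - Real.cos x) x :=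
        (((hasDerivAt_id x).sub ((hasDerivAt_pow 3 x).div_const 6)).add
          ((hasDerivAt_pow 5 x).div_const 120)).sub (Real.hasDerivAt_sin x)
      rw [hd.deriv]
      have := cos_le_taylor x
      nlinarith
  have := hmono Set.self_mem_Ici (Set.mem_Ici.2 ht) ht
  simp at this
  nlinarith [this]

lemma cos_ge_taylor (t : ℝ) : 1 - t ^ 2 / 2 + t ^ 4 / 24 - t ^ 6 / 720 ≤ Real.cos t := by
  wlog ht : 0 ≤ t with H
  · have := H (-t) (by linarith)
    rw [Real.cos_neg] at this; nlinarith [this]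
  have hmono : MonotoneOn
      (fun t : ℝ => Real.cos t - (1 - t ^ 2 / 2 + t ^ 4 / 24 - t ^ 6 / 720)) (Set.Ici 0) := by
    apply monotoneOn_of_deriv_nonneg (convex_Ici 0)
    · exact (Real.continuous_cos.sub (by continuity)).continuousOn
    · intro x hx
      apply DifferentiableAt.differentiableWithinAt; fun_prop
    · intro x hx
      have hd : HasDerivAt
          (fun t : ℝ => Real.cos t - (1 - t ^ 2 / 2 + t ^ 4 / 24 - t ^ 6 / 720))
          ((-Real.sin x) - (0 - ↑2 * x ^ 1 / 2 + ↑4 * x ^ 3 / 24 - ↑6 * x ^ 5 / 720)) x :=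
        (Real.hasDerivAt_cos x).sub ((((hasDerivAt_const x (1:ℝ)).sub
          ((hasDerivAt_pow 2 x).div_const 2)).add ((hasDerivAt_pow 4 x).div_const 24)).sub
          ((hasDerivAt_pow 6 x).div_const 720))
      rw [hd.deriv]
      have hs := sin_le_taylor x (le_of_lt (by simpa using hx))
      nlinarith
  have := hmono Set.self_mem_Ici (Set.mem_Ici.2 ht) ht
  simp at this
  nlinarith [this]

lemma moment_from_seq (ν : Measure ℝ) [IsProbabilityMeasure ν]
    (g : ℕ → ℝ → ℝ) (q : ℝ → ℝ) (c : ℕ → ℝ) (L : ℝ)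
    (hgint : ∀ n, Integrable (g n) ν)
    (hg0 : ∀ n x, 0 ≤ g n x) (hgq : ∀ n x, g n x ≤ q x)
    (hqmeas : AEStronglyMeasurable q ν)
    (hlim : ∀ x, Tendsto (fun n => g n x) atTop (𝓝 (q x)))
    (hint : ∀ n, ∫ x, g n x ∂ν = c n) (hc : Tendsto c atTop (𝓝 L)) :
    Integrable q ν ∧ ∫ x, q x ∂ν = L := by
  have hq0 : ∀ x, 0 ≤ q x := fun x =>
    le_of_tendsto_of_tendsto' tendsto_const_nhds (hlim x) (fun n => hg0 n x)
  have hqint : Integrable q ν := by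
    refine ⟨hqmeas, ?_⟩
    rw [hasFiniteIntegral_iff_ofReal (Eventually.of_forall hq0)]
    have hfatou : ∫⁻ x, ENNReal.ofReal (q x) ∂ν ≤
        atTop.liminf fun n => ∫⁻ x, ENNReal.ofReal (g n x) ∂ν := by
      have : ∀ x, ENNReal.ofReal (q x) = atTop.liminf fun n => ENNReal.ofReal (g n x) := by
        intro x
        exact (((ENNReal.continuous_ofReal.tendsto _).comp (hlim x)).liminf_eq).symm
      calc ∫⁻ x, ENNReal.ofReal (q x) ∂ν
          = ∫⁻ x, atTop.liminf fun n => ENNReal.ofReal (g n x) ∂ν := by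
            congr 1; ext x; exact this x
        _ ≤ _ := lintegral_liminf_le' (fun n =>
            (ENNReal.measurable_ofReal.comp_aemeasurable (hgint n).aemeasurable))
    have hval : ∀ n, ∫⁻ x, ENNReal.ofReal (g n x) ∂ν = ENNReal.ofReal (c n) := by
      intro n
      rw [← ofReal_integral_eq_lintegral_ofReal (hgint n) (Eventually.of_forall (hg0 n)), hint n]
    have : atTop.liminf (fun n => ∫⁻ x, ENNReal.ofReal (g n x) ∂ν) = ENNReal.ofReal L := by
      simp_rw [hval]
      exact ((ENNReal.continuous_ofReal.tendsto _).comp hc).liminf_eq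
    exact lt_of_le_of_lt (hfatou.trans this.le) ENNReal.ofReal_lt_top
  refine ⟨hqint, ?_⟩
  have hdct : Tendsto (fun n => ∫ x, g n x ∂ν) atTop (𝓝 (∫ x, q x ∂ν)) := by
    apply tendsto_integral_of_dominated_convergence q (fun n => (hgint n).1) hqint
    · intro n
      filter_upwards with x
      rw [Real.norm_eq_abs, abs_of_nonneg (hg0 n x)]
      exact hgq n x
    · filter_upwards with x using hlim x
  simp_rw [hint] at hdct
  exact tendsto_nhds_unique hdct hc

theorem stmt_5 (ρ θ : ℝ) (hρ : ρ ∈ Set.Ioc (0 : ℝ) 1) (hθ : 0 < θ)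
    (ν : Measure ℝ) [IsProbabilityMeasure ν]
    (hchar : ∀ ξ : ℝ, ∫ x, Complex.exp (Complex.I * ((ξ * x : ℝ) : ℂ)) ∂ν
        = ((uGamma ρ (θ + ξ ^ 2 / 2) / uGamma ρ θ : ℝ) : ℂ)) :
    (∫ x, x ^ 2 ∂ν = θ ^ (ρ - 1) * Real.exp (-θ) / uGamma ρ θ) ∧
    (∫ x, x ^ 4 ∂ν
        = 3 * Real.exp (-θ) * (θ ^ (ρ - 1) + (1 - ρ) * θ ^ (ρ - 2)) / uGamma ρ θ) := by
  obtain ⟨hρ0, hρ1⟩ := hρ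
  have hG : 0 < uGamma ρ θ := uGamma_pos ρ hρ1 hθ
  set G := uGamma ρ θ with hGdef
  set p : ℝ → ℝ := fun y => Real.exp (-y) * y ^ (ρ - 1) with hp
  set ψ : ℝ → ℝ := fun u => uGamma ρ (θ + u) / G with hψ
  have hψ0 : ψ 0 = 1 := by simp [hψ, hGdef, div_self hG.ne', (show uGamma ρ θ ≠ 0 from hG.ne')]
  have hψd : ∀ u : ℝ, -θ < u → HasDerivAt ψ (-(p (θ + u)) / G) u := by
    intro u hu
    have h1 : HasDerivAt (fun u : ℝ => uGamma ρ (θ + u)) (-(p (θ + u))) u := by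
      have := (uGamma_hasDerivAt ρ hρ1 (show (0:ℝ) < θ + u by linarith)).comp u
        ((hasDerivAt_id u).const_add θ)
      simpa [hp, Function.comp_def] using this
    exact h1.div_const G
  -- characteristic function real part
  have hexpint : ∀ ξ : ℝ, Integrable (fun x : ℝ => Complex.exp (Complex.I * ((ξ * x : ℝ) : ℂ))) ν := by
    intro ξ
    apply Integrable.mono' (integrable_const (1:ℝ))
    · apply Continuous.aestronglyMeasurable
      exact Complex.continuous_exp.comp (continuous_const.mul
        (Complex.continuous_ofReal.comp (continuous_const.mul continuous_id)))
    · filter_upwards with x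
      rw [Complex.norm_exp]
      simp
  have hcosint : ∀ ξ : ℝ, Integrable (fun x : ℝ => Real.cos (ξ * x)) ν := by
    intro ξ
    apply Integrable.mono' (integrable_const (1:ℝ))
    · exact (Real.continuous_cos.comp (continuous_const.mul continuous_id)).aestronglyMeasurable
    · filter_upwards with x
      rw [Real.norm_eq_abs]
      exact Real.abs_cos_le_one _
  have hcos : ∀ ξ : ℝ, ∫ x, Real.cos (ξ * x) ∂ν = ψ (ξ ^ 2 / 2) := by
    intro ξ
    have h1 := integral_re (hexpint ξ)
    rw [hchar ξ] at h1
    simp only [RCLike.re_to_complex, Complex.ofReal_re] at h1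
    have h2 : ψ (ξ ^ 2 / 2) = uGamma ρ (θ + ξ ^ 2 / 2) / G := rfl
    rw [h2, ← h1]
    congr 1
    ext x
    rw [mul_comm Complex.I _, Complex.exp_ofReal_mul_I_re]
  -- sequence
  set a : ℕ → ℝ := fun n => ((n : ℝ) + 1)⁻¹ with ha
  have ha0 : ∀ n, 0 < a n := fun n => by positivity
  have hato : Tendsto a atTop (𝓝 0) := by
    have : Tendsto (fun n : ℕ => 1 / ((n : ℝ) + 1)) atTop (𝓝 0) :=
      tendsto_one_div_add_atTop_nhds_zero_nat
    simpa [ha, one_div] using this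
  set u : ℕ → ℝ := fun n => (a n) ^ 2 / 2 with hu
  have hu0 : ∀ n, 0 < u n := fun n => by positivity
  have hut : Tendsto u atTop (𝓝 0) := by
    have h2 := ((hato.mul hato).div_const 2)
    simpa [hu, pow_two] using h2
  have hutIoi : Tendsto u atTop (𝓝[>] (0:ℝ)) :=
    tendsto_nhdsWithin_of_tendsto_nhds_of_eventually_within _ hut
      (Eventually.of_forall fun n => hu0 n)
  have hutNe : Tendsto u atTop (𝓝[≠] (0:ℝ)) :=
    tendsto_nhdsWithin_of_tendsto_nhds_of_eventually_within _ hut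
      (Eventually.of_forall fun n => (hu0 n).ne')
  -- second moment
  set g2 : ℕ → ℝ → ℝ := fun n x => 2 * (1 - Real.cos (a n * x)) / (a n) ^ 2 with hg2
  set c2 : ℕ → ℝ := fun n => 2 * (1 - ψ (u n)) / (a n) ^ 2 with hc2def
  have hg2int : ∀ n, Integrable (g2 n) ν := by
    intro n
    exact (((integrable_const (1:ℝ)).sub (hcosint (a n))).const_mul 2).div_const _
  have hg2_0 : ∀ n x, 0 ≤ g2 n x := by
    intro n x
    apply div_nonneg
    · nlinarith [Real.cos_le_one (a n * x)]
    · positivity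
  have hg2q : ∀ n x, g2 n x ≤ x ^ 2 := by
    intro n x
    rw [hg2, div_le_iff₀ (by positivity : (0:ℝ) < (a n)^2)]
    have := Real.one_sub_sq_div_two_le_cos (x := a n * x)
    nlinarith
  have hlim2 : ∀ x : ℝ, Tendsto (fun n => g2 n x) atTop (𝓝 (x ^ 2)) := by
    intro x
    have hlower : Tendsto (fun n => x ^ 2 - (a n) ^ 2 * x ^ 4 / 12) atTop (𝓝 (x ^ 2)) := by
      have h2 : Tendsto (fun n => (a n) ^ 2 * x ^ 4 / 12) atTop (𝓝 0) := by
        have := (((hato.mul hato)).mul_const (x ^ 4)).div_const 12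
        simpa [pow_two] using this
      have h3 : Tendsto (fun _ : ℕ => x ^ 2) atTop (𝓝 (x ^ 2)) := tendsto_const_nhds
      simpa using h3.sub h2
    apply tendsto_of_tendsto_of_tendsto_of_le_of_le hlower tendsto_const_nhds
    · intro n
      rw [hg2, le_div_iff₀ (by positivity : (0:ℝ) < (a n)^2)]
      have := cos_le_taylor (a n * x)
      nlinarith
    · intro n; exact hg2q n x
  have hint2 : ∀ n, ∫ x, g2 n x ∂ν = c2 n := by
    intro n
    rw [hg2, hc2def]
    simp only
    rw [integral_div, integral_const_mul,
      integral_sub (integrable_const (1:ℝ)) (hcosint (a n)), integral_const, hcos (a n)]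
    simp [hu]
  have hslope2 : Tendsto c2 atTop (𝓝 (p θ / G)) := by
    have hd0 : HasDerivAt ψ (-(p θ) / G) 0 := by
      have := hψd 0 (by linarith)
      simpa using this
    have hs := hasDerivAt_iff_tendsto_slope.1 hd0
    have hcomp := hs.comp hutNe
    have : Tendsto (fun n => -(slope ψ 0 (u n))) atTop (𝓝 (-(-(p θ) / G))) := hcomp.neg
    rw [neg_div, neg_neg] at this
    apply this.congr
    intro n
    rw [slope_def_field, hc2def]
    simp only [hψ0, hu, sub_zero]
    ring
  obtain ⟨hx2int, hM2⟩ := moment_from_seq ν g2 (fun x => x ^ 2) c2 (p θ / G)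
    hg2int hg2_0 hg2q (continuous_pow 2).aestronglyMeasurable hlim2 hint2 hslope2
  constructor
  · rw [hM2, hp]; ring
  -- fourth moment
  set pd : ℝ := Real.exp (-θ) * ((ρ - 1) * θ ^ (ρ - 2) - θ ^ (ρ - 1)) with hpd
  have hφpd : HasDerivAt (fun v : ℝ => p (θ + v)) pd 0 := by
    have h1 : HasDerivAt (fun y : ℝ => Real.exp (-y)) (-Real.exp (-θ)) θ := by
      have := (Real.hasDerivAt_exp (-θ)).comp θ (hasDerivAt_neg θ)
      simpa [Function.comp_def] using this
    have h2 : HasDerivAt (fun y : ℝ => y ^ (ρ - 1)) ((ρ - 1) * θ ^ (ρ - 2)) θ := by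
      have := Real.hasDerivAt_rpow_const (x := θ) (p := ρ - 1) (Or.inl hθ.ne')
      rwa [show ρ - 1 - 1 = ρ - 2 by ring] at this
    have h3 : HasDerivAt p pd θ := by
      have := h1.mul h2
      rw [hp, hpd]
      exact this.congr_deriv (by ring)
    have h5 : HasDerivAt p pd (θ + id (0:ℝ)) := by simpa using h3
    have := h5.comp 0 ((hasDerivAt_id 0).const_add θ)
    simpa [Function.comp_def] using this
  set F : ℝ → ℝ := fun v => ψ v - 1 + (p θ / G) * v with hF
  have hFd : ∀ x : ℝ, -θ < x → HasDerivAt F (-(p (θ + x)) / G + p θ / G) x := by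
    intro x hx
    have h1 : HasDerivAt (fun v : ℝ => (p θ / G) * v) (p θ / G) x := by
      have := (hasDerivAt_id x).const_mul (p θ / G)
      simpa using this
    exact ((hψd x hx).sub_const 1).add h1
  have hF0 : F 0 = 0 := by simp [hF, hψ0]
  have hlhop : Tendsto (fun v => F v / v ^ 2) (𝓝[>] (0:ℝ)) (𝓝 (-pd / (2 * G))) := by
    apply HasDerivAt.lhopital_zero_right_on_Ioo hθ
      (f' := fun x => -(p (θ + x)) / G + p θ / G) (g' := fun x => 2 * x)
    · intro x hx; exact hFd x (by linarith [hx.1])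
    · intro x hx
      have : HasDerivAt (fun v : ℝ => v ^ 2) ((2:ℕ) * x ^ 1) x := hasDerivAt_pow 2 x
      simpa using this
    · intro x hx
      have := hx.1
      positivity
    · have hcont : ContinuousAt F 0 := (hFd 0 (by linarith)).continuousAt
      have h6 : Tendsto F (𝓝[>] (0:ℝ)) (𝓝 (F 0)) :=
        hcont.tendsto.mono_left (nhdsWithin_le_nhds (s := Set.Ioi (0:ℝ)))
      rwa [hF0] at h6
    · have := ((continuous_pow 2).tendsto (0:ℝ)).mono_left
        (nhdsWithin_le_nhds (s := Set.Ioi (0:ℝ)))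
      simpa using this
    · have hmono : 𝓝[>] (0:ℝ) ≤ 𝓝[≠] (0:ℝ) :=
        nhdsWithin_mono 0 (fun x hx => ne_of_gt hx)
      have hslope := (hasDerivAt_iff_tendsto_slope.1 hφpd).mono_left hmono
      have h4 := hslope.neg.div_const (2 * G)
      apply Tendsto.congr' _ h4
      filter_upwards [self_mem_nhdsWithin] with x hx
      have hx0 : x ≠ 0 := ne_of_gt hx
      rw [slope_def_field]
      field_simp
      ring
  set g4 : ℕ → ℝ → ℝ := fun n x => 24 * (Real.cos (a n * x) - 1 + a n ^ 2 * x ^ 2 / 2) / a n ^ 4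
    with hg4
  set c4 : ℕ → ℝ := fun n => 24 * (ψ (u n) - 1 + p θ / G * u n) / a n ^ 4 with hc4def
  have hg4int : ∀ n, Integrable (g4 n) ν := by
    intro n
    apply Integrable.div_const
    apply Integrable.const_mul
    exact ((hcosint (a n)).sub (integrable_const (1:ℝ))).add
      ((hx2int.const_mul (a n ^ 2)).div_const 2)
  have hg4_0 : ∀ n x, 0 ≤ g4 n x := by
    intro n x
    apply div_nonneg _ (by positivity)
    nlinarith [Real.one_sub_sq_div_two_le_cos (x := a n * x)]
  have hg4q : ∀ n x, g4 n x ≤ x ^ 4 := by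
    intro n x
    rw [hg4, div_le_iff₀ (by positivity : (0:ℝ) < a n ^ 4)]
    nlinarith [cos_le_taylor (a n * x)]
  have hlim4 : ∀ x : ℝ, Tendsto (fun n => g4 n x) atTop (𝓝 (x ^ 4)) := by
    intro x
    have hlower : Tendsto (fun n => x ^ 4 - a n ^ 2 * x ^ 6 / 30) atTop (𝓝 (x ^ 4)) := by
      have h2 : Tendsto (fun n => a n ^ 2 * x ^ 6 / 30) atTop (𝓝 0) := by
        have := (((hato.mul hato)).mul_const (x ^ 6)).div_const 30
        simpa [pow_two] using this
      have h3 : Tendsto (fun _ : ℕ => x ^ 4) atTop (𝓝 (x ^ 4)) := tendsto_const_nhds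
      simpa using h3.sub h2
    apply tendsto_of_tendsto_of_tendsto_of_le_of_le hlower tendsto_const_nhds
    · intro n
      rw [hg4, le_div_iff₀ (by positivity : (0:ℝ) < a n ^ 4)]
      nlinarith [cos_ge_taylor (a n * x)]
    · intro n; exact hg4q n x
  have hint4 : ∀ n, ∫ x, g4 n x ∂ν = c4 n := by
    intro n
    rw [hg4, hc4def]
    simp only
    have hsub : Integrable (fun x : ℝ => Real.cos (a n * x) - 1) ν :=
      (hcosint (a n)).sub (integrable_const 1)
    have hx2' : Integrable (fun x : ℝ => a n ^ 2 * x ^ 2 / 2) ν :=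
      (hx2int.const_mul (a n ^ 2)).div_const 2
    rw [integral_div, integral_const_mul, integral_add hsub hx2',
      integral_sub (hcosint (a n)) (integrable_const (1:ℝ)), hcos (a n),
      integral_div, integral_const_mul, hM2]
    simp [hu]
    ring
  have hc4 : Tendsto c4 atTop (𝓝 (6 * (-pd / (2 * G)))) := by
    have h5 := (hlhop.comp hutIoi).const_mul 6
    apply h5.congr
    intro n
    have hun : u n ≠ 0 := (hu0 n).ne'
    have ha4 : a n ^ 4 = 4 * u n ^ 2 := by
      simp only [hu]
      ring
    simp only [Function.comp_apply, hc4def, ha4, hF]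
    field_simp
    ring
  obtain ⟨hx4int, hM4⟩ := moment_from_seq ν g4 (fun x => x ^ 4) c4 (6 * (-pd / (2 * G)))
    hg4int hg4_0 hg4q (continuous_pow 4).aestronglyMeasurable hlim4 hint4 hc4
  rw [hM4, hpd]
  ring
end

section
/- Let ρ ∈ (0,1], α ∈ (0,1], ξ ∈ ℝ, and set Φ(t) := Γ(ρ, ξ²t^α/2)/Γ(ρ) for t > 0. Then for every t > 0, Φ is differentiable at t and Φ'(t) = (αρ/t)(Φ(t) - 1) - (α/2) t^{α-1} ξ² Φ(t) + (α²ξ²/(2t)) ∫_0^t z^{α-1} Φ(z) dz. -/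
open MeasureTheory Real Set
open Filter

lemma uGamma_zero {ρ : ℝ} (hρ : 0 < ρ) : uGamma ρ 0 = Real.Gamma ρ :=
  (Real.Gamma_eq_integral hρ).symm

lemma integrableOn_f {ρ : ℝ} (hρ : 0 < ρ) {x : ℝ} (hx : 0 ≤ x) :
    IntegrableOn (fun w => Real.exp (-w) * w ^ (ρ - 1)) (Ioi x) :=
  (Real.GammaIntegral_convergent hρ).mono_set (Ioi_subset_Ioi hx)

lemma uGamma_eq {ρ : ℝ} (hρ : 0 < ρ) {x : ℝ} (hx : 0 ≤ x) :
    uGamma ρ x = Real.Gamma ρ - ∫ w in (0:ℝ)..x, Real.exp (-w) * w ^ (ρ - 1) := by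
  have h1 : (∫ w in (0:ℝ)..x, Real.exp (-w) * w ^ (ρ - 1))
      = ∫ w in Ioc (0:ℝ) x, Real.exp (-w) * w ^ (ρ - 1) := by
    rw [intervalIntegral.integral_of_le hx]
  have hsplit : (∫ w in Ioc (0:ℝ) x, Real.exp (-w) * w ^ (ρ - 1))
      + ∫ w in Ioi x, Real.exp (-w) * w ^ (ρ - 1)
      = ∫ w in Ioi (0:ℝ), Real.exp (-w) * w ^ (ρ - 1) := by
    rw [← MeasureTheory.setIntegral_union (Set.Ioc_disjoint_Ioi le_rfl)
      measurableSet_Ioi ((Real.GammaIntegral_convergent hρ).mono_set Ioc_subset_Ioi_self)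
      (integrableOn_f hρ hx), Set.Ioc_union_Ioi_eq_Ioi hx]
  rw [Real.Gamma_eq_integral hρ, uGamma, h1]
  linarith [hsplit]

lemma hasDerivAt_uGamma {ρ : ℝ} (hρ : 0 < ρ) {x : ℝ} (hx : 0 < x) :
    HasDerivAt (uGamma ρ) (-(Real.exp (-x) * x ^ (ρ - 1))) x := by
  have hd : HasDerivAt (fun y => Real.Gamma ρ - ∫ w in (0:ℝ)..y, Real.exp (-w) * w ^ (ρ - 1))
      (-(Real.exp (-x) * x ^ (ρ - 1))) x := by
    have hint : IntervalIntegrable (fun w => Real.exp (-w) * w ^ (ρ - 1)) volume 0 x := by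
      rw [intervalIntegrable_iff_integrableOn_Ioc_of_le hx.le]
      exact ((Real.GammaIntegral_convergent hρ).mono_set Ioc_subset_Ioi_self)
    have hmeas : StronglyMeasurableAtFilter (fun w => Real.exp (-w) * w ^ (ρ - 1)) (nhds x) := by
      have hcontOn : ContinuousOn (fun w => Real.exp (-w) * w ^ (ρ - 1)) (Ioi 0) :=
        continuousOn_id.neg.rexp.mul
          (continuousOn_id.rpow_const fun y hy => Or.inl (ne_of_gt hy))
      exact AEStronglyMeasurable.stronglyMeasurableAtFilter_of_mem
        (hcontOn.aestronglyMeasurable measurableSet_Ioi) (Ioi_mem_nhds hx)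
    have hcont : ContinuousAt (fun w => Real.exp (-w) * w ^ (ρ - 1)) x := by
      exact (Real.continuous_exp.comp continuous_neg).continuousAt.mul
        (Real.continuousAt_rpow_const _ _ (Or.inl hx.ne'))
    have := (intervalIntegral.integral_hasDerivAt_right hint hmeas hcont).const_sub (Real.Gamma ρ)
    simpa using this
  refine hd.congr_of_eventuallyEq ?_
  filter_upwards [eventually_gt_nhds hx] with y hy
  rw [uGamma_eq hρ hy.le]

lemma continuousOn_uGamma {ρ : ℝ} (hρ : 0 < ρ) : ContinuousOn (uGamma ρ) (Ici 0) := by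
  intro x hx
  have hT : x ∈ Icc (0:ℝ) (x + 1) := ⟨hx, by linarith⟩
  have h_int : IntegrableOn (fun w => Real.exp (-w) * w ^ (ρ - 1)) (Icc 0 (x + 1)) := by
    rw [integrableOn_Icc_iff_integrableOn_Ioc]
    exact (Real.GammaIntegral_convergent hρ).mono_set Ioc_subset_Ioi_self
  have hc : ContinuousOn (fun y => Real.Gamma ρ - ∫ w in Ioc (0:ℝ) y, Real.exp (-w) * w ^ (ρ - 1))
      (Icc 0 (x + 1)) := continuousOn_const.sub (intervalIntegral.continuousOn_primitive h_int)
  have hc2 : ContinuousOn (uGamma ρ) (Icc 0 (x + 1)) := by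
    refine hc.congr fun y hy => ?_
    rw [uGamma_eq hρ hy.1, intervalIntegral.integral_of_le hy.1]
  have := hc2 x hT
  refine this.mono_of_mem_nhdsWithin ?_
  have : Icc (0:ℝ) (x+1) = Ici 0 ∩ Iic (x+1) := (Ici_inter_Iic).symm
  rw [this]
  exact inter_mem_nhdsWithin _ (Iic_mem_nhds (by linarith))

lemma tendsto_uGamma {ρ : ℝ} (hρ : 0 < ρ) : Tendsto (uGamma ρ) atTop (nhds 0) := by
  have h := MeasureTheory.intervalIntegral_tendsto_integral_Ioi 0
    (Real.GammaIntegral_convergent hρ) tendsto_id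
  have h2 : Tendsto (fun x : ℝ => Real.Gamma ρ - ∫ w in (0:ℝ)..x, Real.exp (-w) * w ^ (ρ - 1))
      atTop (nhds (Real.Gamma ρ - ∫ w in Ioi (0:ℝ), Real.exp (-w) * w ^ (ρ - 1))) :=
    tendsto_const_nhds.sub h
  rw [← Real.Gamma_eq_integral hρ, sub_self] at h2
  refine h2.congr' ?_
  filter_upwards [eventually_ge_atTop (0:ℝ)] with x hx
  rw [uGamma_eq hρ hx]

lemma hasDerivAt_aux {ρ : ℝ} (hρ : 0 < ρ) {w : ℝ} (hw : 0 < w) :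
    HasDerivAt (fun w => uGamma (ρ+1) w - ρ * uGamma ρ w - w ^ ρ * Real.exp (-w)) 0 w := by
  have h1 : HasDerivAt (uGamma (ρ+1)) (-(Real.exp (-w) * w ^ (ρ+1-1))) w :=
    hasDerivAt_uGamma (by linarith) hw
  have h2 := (hasDerivAt_uGamma hρ hw).const_mul ρ
  have h3 : HasDerivAt (fun w : ℝ => w ^ ρ * Real.exp (-w))
      (ρ * w ^ (ρ-1) * Real.exp (-w) + w ^ ρ * (Real.exp (-w) * (-1))) w := by
    have ha : HasDerivAt (fun w : ℝ => w ^ ρ) (ρ * w ^ (ρ-1)) w := by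
      simpa [mul_comm] using Real.hasDerivAt_rpow_const (x := w) (p := ρ) (Or.inl hw.ne')
    have hb : HasDerivAt (fun w : ℝ => Real.exp (-w)) (Real.exp (-w) * (-1)) w :=
      (hasDerivAt_neg w).exp
    exact ha.mul hb
  have := (h1.sub h2).sub h3
  have hx : w ^ (ρ + 1 - 1) = w ^ (ρ - 1) * w := by
    rw [← Real.rpow_add_one hw.ne' (ρ-1)]; ring_nf
  have hx2 : w ^ ρ = w ^ (ρ - 1) * w := by
    rw [← Real.rpow_add_one hw.ne' (ρ-1)]; ring_nf
  refine this.congr_deriv ?_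
  rw [hx, hx2]; ring

lemma uGamma_succ {ρ : ℝ} (hρ : 0 < ρ) {x : ℝ} (hx : 0 < x) :
    uGamma (ρ+1) x = ρ * uGamma ρ x + x ^ ρ * Real.exp (-x) := by
  set g := fun w => uGamma (ρ+1) w - ρ * uGamma ρ w - w ^ ρ * Real.exp (-w) with hg
  have htend : Tendsto g atTop (nhds 0) := by
    have h3 : Tendsto (fun w : ℝ => w ^ ρ * Real.exp (-w)) atTop (nhds 0) := by
      have := tendsto_rpow_mul_exp_neg_mul_atTop_nhds_zero ρ 1 one_pos
      simpa using this
    have := ((tendsto_uGamma (by linarith : (0:ℝ) < ρ + 1)).sub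
      ((tendsto_uGamma hρ).const_mul ρ)).sub h3
    simpa using this
  have key : (∫ w in Ioi x, (0:ℝ)) = 0 - g x := by
    refine MeasureTheory.integral_Ioi_of_hasDerivAt_of_tendsto
      (hasDerivAt_aux hρ hx).continuousAt.continuousWithinAt
      (fun y hy => hasDerivAt_aux hρ (hx.trans hy)) ?_ htend
    simp [integrableOn_zero]
  simp only [integral_zero] at key
  have : g x = 0 := by linarith
  simp only [hg] at this
  linarith

lemma uGamma_nonneg {ρ x : ℝ} (hx : 0 ≤ x) : 0 ≤ uGamma ρ x := by
  refine MeasureTheory.setIntegral_nonneg measurableSet_Ioi fun w hw => ?_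
  exact mul_nonneg (Real.exp_nonneg _) (Real.rpow_nonneg (le_trans hx (le_of_lt hw)) _)

lemma uGamma_le {ρ : ℝ} (hρ : 0 < ρ) {x : ℝ} (hx : 0 ≤ x) : uGamma ρ x ≤ Real.Gamma ρ := by
  rw [uGamma_eq hρ hx]
  have : (0:ℝ) ≤ ∫ w in (0:ℝ)..x, Real.exp (-w) * w ^ (ρ - 1) := by
    refine intervalIntegral.integral_nonneg hx fun w hw => ?_
    exact mul_nonneg (Real.exp_nonneg _) (Real.rpow_nonneg hw.1 _)
  linarith

lemma integrand_integrable {ρ α : ℝ} (hρ : 0 < ρ) (hα : 0 < α) (c : ℝ) (hc : 0 ≤ c) {t : ℝ}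
    (ht : 0 < t) :
    IntervalIntegrable (fun z => z ^ (α - 1) * (uGamma ρ (c * z ^ α) / Real.Gamma ρ))
      volume 0 t := by
  have hΓ : 0 < Real.Gamma ρ := Real.Gamma_pos_of_pos hρ
  have hmaj : IntervalIntegrable (fun z : ℝ => z ^ (α - 1)) volume 0 t :=
    intervalIntegral.intervalIntegrable_rpow' (by linarith)
  rw [intervalIntegrable_iff_integrableOn_Ioc_of_le ht.le] at hmaj ⊢
  have hmeas : AEStronglyMeasurable (fun z => z ^ (α - 1) * (uGamma ρ (c * z ^ α) / Real.Gamma ρ))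
      (volume.restrict (Ioc 0 t)) := by
    have hcX : ContinuousOn (fun z : ℝ => c * z ^ α) (Ioc 0 t) :=
      (continuousOn_id.rpow_const fun z hz => Or.inl (ne_of_gt hz.1)).const_smul c
    have h1 : ContinuousOn (fun z : ℝ => z ^ (α - 1)) (Ioc 0 t) :=
      continuousOn_id.rpow_const fun z hz => Or.inl (ne_of_gt hz.1)
    have h2 : ContinuousOn (fun z => uGamma ρ (c * z ^ α) / Real.Gamma ρ) (Ioc 0 t) := by
      refine ((continuousOn_uGamma hρ).comp hcX fun z hz => ?_).div_const _
      exact mul_nonneg hc (Real.rpow_nonneg hz.1.le _)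
    exact (h1.mul h2).aestronglyMeasurable measurableSet_Ioc
  refine hmaj.integrable.mono hmeas ?_
  filter_upwards [MeasureTheory.ae_restrict_mem measurableSet_Ioc] with z hz
  have hz0 : (0:ℝ) < z := hz.1
  have hΦ0 : 0 ≤ uGamma ρ (c * z ^ α) / Real.Gamma ρ :=
    div_nonneg (uGamma_nonneg (mul_nonneg hc (Real.rpow_nonneg hz0.le _))) hΓ.le
  have hΦ1 : uGamma ρ (c * z ^ α) / Real.Gamma ρ ≤ 1 := by
    rw [div_le_one hΓ]
    exact uGamma_le hρ (mul_nonneg hc (Real.rpow_nonneg hz0.le _))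
  rw [Real.norm_eq_abs, Real.norm_eq_abs, abs_of_nonneg (Real.rpow_nonneg hz0.le _),
    abs_of_nonneg (mul_nonneg (Real.rpow_nonneg hz0.le _) hΦ0)]
  nlinarith [Real.rpow_nonneg hz0.le (α - 1)]

lemma integral_key {ρ α c t : ℝ} (hρ : 0 < ρ) (hα : 0 < α) (hc : 0 < c) (ht : 0 < t) :
    ∫ z in Ioo (0:ℝ) t, z ^ (α - 1) * (uGamma ρ (c * z ^ α) / Real.Gamma ρ)
      = (c * t ^ α * uGamma ρ (c * t ^ α) - uGamma (ρ+1) (c * t ^ α) + ρ * Real.Gamma ρ)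
          / (c * α * Real.Gamma ρ) := by
  have hΓ : 0 < Real.Gamma ρ := Real.Gamma_pos_of_pos hρ
  set F := fun z : ℝ => (c * z ^ α * uGamma ρ (c * z ^ α) - uGamma (ρ+1) (c * z ^ α))
      / (c * α * Real.Gamma ρ) with hF
  have hXcont : Continuous (fun z : ℝ => c * z ^ α) := by
    refine continuous_const.mul (continuous_iff_continuousAt.2 fun z => ?_)
    exact Real.continuousAt_rpow_const _ _ (Or.inr hα.le)
  have hXmem : ∀ z : ℝ, 0 ≤ z → (0:ℝ) ≤ c * z ^ α := fun z hz =>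
    mul_nonneg hc.le (Real.rpow_nonneg hz _)
  have hcontF : ContinuousOn F (Icc 0 t) := by
    refine ContinuousOn.div_const ?_ _
    refine ContinuousOn.sub ?_ ?_
    · exact (hXcont.continuousOn).mul
        (((continuousOn_uGamma hρ).comp hXcont.continuousOn) fun z hz => hXmem z hz.1)
    · exact ((continuousOn_uGamma (by linarith : (0:ℝ) < ρ + 1)).comp hXcont.continuousOn)
        fun z hz => hXmem z hz.1
  have hderiv : ∀ z ∈ Ioo (0:ℝ) t,
      HasDerivAt F (z ^ (α - 1) * (uGamma ρ (c * z ^ α) / Real.Gamma ρ)) z := by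
    intro z hz
    have hz0 : (0:ℝ) < z := hz.1
    have hXz : (0:ℝ) < c * z ^ α := mul_pos hc (Real.rpow_pos_of_pos hz0 _)
    have hX : HasDerivAt (fun z : ℝ => c * z ^ α) (c * (α * z ^ (α - 1))) z :=
      (Real.hasDerivAt_rpow_const (Or.inl hz0.ne')).const_mul c
    have hG : HasDerivAt (fun z => uGamma ρ (c * z ^ α))
        (-(Real.exp (-(c * z ^ α)) * (c * z ^ α) ^ (ρ - 1)) * (c * (α * z ^ (α - 1)))) z :=
      by have := (hasDerivAt_uGamma hρ hXz).comp z hX; exact this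
    have hG1 : HasDerivAt (fun z => uGamma (ρ+1) (c * z ^ α))
        (-(Real.exp (-(c * z ^ α)) * (c * z ^ α) ^ (ρ + 1 - 1)) * (c * (α * z ^ (α - 1)))) z :=
      by have := (hasDerivAt_uGamma (by linarith : (0:ℝ) < ρ + 1) hXz).comp z hX; exact this
    have hd : HasDerivAt F
        ((c * (α * z ^ (α - 1)) * uGamma ρ (c * z ^ α)
          + c * z ^ α * (-(Real.exp (-(c * z ^ α)) * (c * z ^ α) ^ (ρ - 1)) * (c * (α * z ^ (α - 1))))
          - -(Real.exp (-(c * z ^ α)) * (c * z ^ α) ^ (ρ + 1 - 1)) * (c * (α * z ^ (α - 1))))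
          / (c * α * Real.Gamma ρ)) z := ((hX.mul hG).sub hG1).div_const _
    convert hd using 1
    have hpow : (c * z ^ α) ^ (ρ + 1 - 1) = (c * z ^ α) ^ (ρ - 1) * (c * z ^ α) := by
      rw [← Real.rpow_add_one hXz.ne' (ρ - 1)]; ring_nf
    rw [hpow]
    field_simp
    ring
  have hint := integrand_integrable hρ hα c hc.le ht
  have := intervalIntegral.integral_eq_sub_of_hasDerivAt_of_le ht.le hcontF hderiv hint
  rw [intervalIntegral.integral_of_le ht.le, MeasureTheory.integral_Ioc_eq_integral_Ioo] at this
  rw [this, hF]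
  have h0 : c * (0:ℝ) ^ α = 0 := by rw [Real.zero_rpow hα.ne']; ring
  simp only [h0]
  rw [uGamma_zero (by linarith : (0:ℝ) < ρ + 1), Real.Gamma_add_one hρ.ne']
  ring

theorem stmt_19 (ρ α ξ : ℝ) (hρ : ρ ∈ Set.Ioc (0 : ℝ) 1) (hα : α ∈ Set.Ioc (0 : ℝ) 1) :
    ∀ t > (0 : ℝ),
      HasDerivAt (fun s : ℝ => uGamma ρ (ξ ^ 2 * s ^ α / 2) / Real.Gamma ρ)
        ((α * ρ / t) * (uGamma ρ (ξ ^ 2 * t ^ α / 2) / Real.Gamma ρ - 1)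
          - (α / 2) * t ^ (α - 1) * ξ ^ 2 * (uGamma ρ (ξ ^ 2 * t ^ α / 2) / Real.Gamma ρ)
          + (α ^ 2 * ξ ^ 2 / (2 * t))
              * ∫ z in Set.Ioo (0 : ℝ) t,
                  z ^ (α - 1) * (uGamma ρ (ξ ^ 2 * z ^ α / 2) / Real.Gamma ρ)) t := by
  obtain ⟨hρ0, hρ1⟩ := hρ
  obtain ⟨hα0, hα1⟩ := hα
  have hΓ : 0 < Real.Gamma ρ := Real.Gamma_pos_of_pos hρ0
  intro t ht
  rcases eq_or_ne ξ 0 with rfl | hξ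
  · have h2 : ∀ s : ℝ, (0:ℝ) ^ 2 * s ^ α / 2 = 0 := fun s => by norm_num
    simp only [h2]
    have h3 : uGamma ρ 0 / Real.Gamma ρ = 1 := by
      rw [uGamma_zero hρ0, div_self hΓ.ne']
    rw [h3]
    norm_num
    exact hasDerivAt_const t _
  · have hc : (0:ℝ) < ξ ^ 2 / 2 := by positivity
    have harg : ∀ s : ℝ, ξ ^ 2 * s ^ α / 2 = ξ ^ 2 / 2 * s ^ α := fun s => by ring
    simp only [harg]
    set c := ξ ^ 2 / 2 with hcdef
    have hx : (0:ℝ) < c * t ^ α := mul_pos hc (Real.rpow_pos_of_pos ht _)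
    set x := c * t ^ α with hxdef
    have hX : HasDerivAt (fun s : ℝ => c * s ^ α) (c * (α * t ^ (α - 1))) t :=
      (Real.hasDerivAt_rpow_const (Or.inl ht.ne')).const_mul c
    have hD : HasDerivAt (fun s : ℝ => uGamma ρ (c * s ^ α) / Real.Gamma ρ)
        (-(Real.exp (-x) * x ^ (ρ - 1)) * (c * (α * t ^ (α - 1))) / Real.Gamma ρ) t :=
      (((hasDerivAt_uGamma hρ0 hx).comp t hX)).div_const _
    convert hD using 1
    rw [integral_key hρ0 hα0 hc ht, uGamma_succ hρ0 hx]
    have ht' : t ^ (α - 1) = t ^ α / t := by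
      rw [Real.rpow_sub ht, Real.rpow_one]
    have hx' : x ^ (ρ - 1) = x ^ ρ / x := by
      rw [Real.rpow_sub hx, Real.rpow_one]
    rw [ht', hx', hxdef]
    field_simp
    ring
end
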